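/- In the free noncommutative algebra C⟨a,b⟩ modulo the two-sided ideal generated by ab+ba and -a² + b³ + aba, the element a³ equals 0. -/

import Mathlib

open FreeAlgebra

/-- The relations defining the contraction algebra Γ = C⟨a,b⟩/(ab+ba, -a²+b³+aba),
with a = ι ℂ 0 and b = ι ℂ 1. -/
inductive GamRel : FreeAlgebra ℂ (Fin 2) → FreeAlgebra ℂ (Fin 2) → Prop
  | r1 : GamRel (ι ℂ 0 * ι ℂ 1 + ι ℂ 1 * ι ℂ 0) 0
  | r2 : GamRel (-(ι ℂ 0) ^ 2 + (ι ℂ 1) ^ 3 + ι ℂ 0 * ι ℂ 1 * ι ℂ 0) 0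

/-!
Since `a` and `b` anticommute, `aba` equals both `-a²b` and `-ba²`, so the second relation
gives `a² = b³ - a²b = b³ - ba²`. Hence `2a³ = a·a² + a²·a = (ab³ + b³a) - (a³b + ba³)`,
and both brackets vanish because odd powers of anticommuting elements anticommute.
-/

section Anticommute

variable {R : Type*} [Ring R] {a b : R}

theorem pow_three_mul_add_mul_pow_three_eq_zero (h : a * b + b * a = 0) :
    a ^ 3 * b + b * a ^ 3 = 0 := by
  have expand : a ^ 3 * b + b * a ^ 3 =
      a ^ 2 * (a * b + b * a) - a * (a * b + b * a) * a + (a * b + b * a) * a ^ 2 := by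
    noncomm_ring
  rw [expand, h, mul_zero, mul_zero, zero_mul, zero_mul, sub_zero, add_zero]

theorem two_mul_pow_three_eq_zero (h₁ : a * b + b * a = 0) (h₂ : -a ^ 2 + b ^ 3 + a * b * a = 0) :
    2 * a ^ 3 = 0 := by
  have hba : b * a = -(a * b) := eq_neg_of_add_eq_zero_right h₁
  have hab : a * b = -(b * a) := eq_neg_of_add_eq_zero_left h₁
  have sq_eq_left : a ^ 2 = b ^ 3 - a ^ 2 * b := by
    have haba : a * b * a = -(a ^ 2 * b) := by rw [mul_assoc, hba, mul_neg, ← mul_assoc, sq]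
    rw [haba] at h₂
    rw [← sub_eq_zero, ← neg_eq_zero, ← h₂]
    abel
  have sq_eq_right : a ^ 2 = b ^ 3 - b * a ^ 2 := by
    have haba : a * b * a = -(b * a ^ 2) := by rw [hab, neg_mul, mul_assoc, sq]
    rw [haba] at h₂
    rw [← sub_eq_zero, ← neg_eq_zero, ← h₂]
    abel
  calc 2 * a ^ 3 = a * a ^ 2 + a ^ 2 * a := by noncomm_ring
    _ = a * (b ^ 3 - a ^ 2 * b) + (b ^ 3 - b * a ^ 2) * a := by
      rw [← sq_eq_left, ← sq_eq_right]
    _ = (b ^ 3 * a + a * b ^ 3) - (a ^ 3 * b + b * a ^ 3) := by noncomm_ring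
    _ = 0 := by
      rw [pow_three_mul_add_mul_pow_three_eq_zero (add_comm (a * b) (b * a) ▸ h₁),
        pow_three_mul_add_mul_pow_three_eq_zero h₁, sub_zero]

end Anticommute

theorem stmt0 :
    (RingQuot.mkAlgHom ℂ GamRel (ι ℂ 0)) ^ 3 = 0 := by
  set a := RingQuot.mkAlgHom ℂ GamRel (ι ℂ 0)
  set b := RingQuot.mkAlgHom ℂ GamRel (ι ℂ 1)
  have h₁ : a * b + b * a = 0 := by simpa using RingQuot.mkAlgHom_rel ℂ GamRel.r1
  have h₂ : -a ^ 2 + b ^ 3 + a * b * a = 0 := by simpa using RingQuot.mkAlgHom_rel ℂ GamRel.r2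
  have h : (2 : ℂ) • a ^ 3 = 0 := by rw [two_smul, ← two_mul, two_mul_pow_three_eq_zero h₁ h₂]
  exact (smul_eq_zero.mp h).resolve_left two_ne_zero
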